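/- arXiv:2503.13414 — 8 statements merged into one kernel-verified Lean document; each statement's English description precedes it below -/
import Mathlib

section
/- Suppose the transition kernel satisfies p(s'|s,a) = 0 whenever s' ∉ N(s,a), and suppose the initial Q-functions satisfy Q₀^{LB} ≤ Q₀ ≤ Q₀^{UB} pointwise. Then for every k ≥ 0, the k-fold iterates satisfy T_min^k Q₀^{LB} ≤ T^k Q₀ ≤ T_max^k Q₀^{UB} pointwise. -/
/-- Maximum of a real-valued function over a nonempty finite type. -/
noncomputable def qmax {I : Type*} [Fintype I] [Nonempty I] (f : I → ℝ) : ℝ :=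
  Finset.univ.sup' Finset.univ_nonempty f

/-- Q-M Bellman operator `T_max`:
`(T_max Q)(s,a) = max_{s' ∈ N(s,a)} [R(s,a,s') + γ max_{a'} Q(s',a')]`. -/
noncomputable def Tmax {S A : Type*} [Fintype A] [Nonempty A]
    (γ : ℝ) (R : S → A → S → ℝ) (N : S → A → Finset S) (hN : ∀ s a, (N s a).Nonempty)
    (Q : S → A → ℝ) : S → A → ℝ :=
  fun s a => (N s a).sup' (hN s a) fun s' => R s a s' + γ * qmax (Q s')

/-- Q-M Bellman operator `T_min`:
`(T_min Q)(s,a) = min_{s' ∈ N(s,a)} [R(s,a,s') + γ max_{a'} Q(s',a')]`. -/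
noncomputable def Tmin {S A : Type*} [Fintype A] [Nonempty A]
    (γ : ℝ) (R : S → A → S → ℝ) (N : S → A → Finset S) (hN : ∀ s a, (N s a).Nonempty)
    (Q : S → A → ℝ) : S → A → ℝ :=
  fun s a => (N s a).inf' (hN s a) fun s' => R s a s' + γ * qmax (Q s')

/-- Standard Bellman (optimality) operator:
`(T Q)(s,a) = Σ_{s'} p(s'|s,a) [R(s,a,s') + γ max_{a'} Q(s',a')]`. -/
noncomputable def Tstd {S A : Type*} [Fintype S] [Fintype A] [Nonempty A]
    (γ : ℝ) (R : S → A → S → ℝ) (p : S → A → S → ℝ) (Q : S → A → ℝ) : S → A → ℝ :=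
  fun s a => ∑ s', p s a s' * (R s a s' + γ * qmax (Q s'))

lemma qmax_mono {I : Type*} [Fintype I] [Nonempty I] {f g : I → ℝ} (h : ∀ i, f i ≤ g i) :
    qmax f ≤ qmax g :=
  Finset.sup'_mono_fun (fun i _ => h i)

/-- If the kernel is supported in the lite-model and `Q₀^{LB} ≤ Q₀ ≤ Q₀^{UB}` pointwise,
then for every `k`, `T_min^k Q₀^{LB} ≤ T^k Q₀ ≤ T_max^k Q₀^{UB}` pointwise. -/
theorem iterates_ordered {S A : Type*} [Fintype S] [Fintype A] [Nonempty S] [Nonempty A]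
    (γ : ℝ) (hγ0 : 0 ≤ γ) (hγ1 : γ < 1)
    (R : S → A → S → ℝ) (N : S → A → Finset S) (hN : ∀ s a, (N s a).Nonempty)
    (p : S → A → S → ℝ)
    (hp0 : ∀ s a s', 0 ≤ p s a s') (hp1 : ∀ s a, ∑ s', p s a s' = 1)
    (hsupp : ∀ s a s', s' ∉ N s a → p s a s' = 0)
    (QLB Q₀ QUB : S → A → ℝ)
    (hlb : ∀ s a, QLB s a ≤ Q₀ s a) (hub : ∀ s a, Q₀ s a ≤ QUB s a) :
    ∀ k : ℕ, ∀ s a,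
      (Tmin γ R N hN)^[k] QLB s a ≤ (Tstd γ R p)^[k] Q₀ s a ∧
        (Tstd γ R p)^[k] Q₀ s a ≤ (Tmax γ R N hN)^[k] QUB s a := by
  intro k
  induction k with
  | zero => intro s a; exact ⟨hlb s a, hub s a⟩
  | succ k ih =>
    intro s a
    simp only [Function.iterate_succ_apply']
    set L := (Tmin γ R N hN)^[k] QLB with hL
    set M := (Tstd γ R p)^[k] Q₀ with hM
    set U := (Tmax γ R N hN)^[k] QUB with hU
    constructor
    · -- Tmin L s a ≤ Tstd M s a
      set c := Tmin γ R N hN L s a with hc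
      have key : ∀ s', p s a s' * c ≤ p s a s' * (R s a s' + γ * qmax (M s')) := by
        intro s'
        by_cases hmem : s' ∈ N s a
        · apply mul_le_mul_of_nonneg_left _ (hp0 s a s')
          calc c ≤ R s a s' + γ * qmax (L s') := by rw [hc]; exact Finset.inf'_le (fun t => R s a t + γ * qmax (L t)) hmem
            _ ≤ R s a s' + γ * qmax (M s') := by
                gcongr
                exact qmax_mono fun a' => (ih s' a').1
        · simp [hsupp s a s' hmem]
      calc c = ∑ s', p s a s' * c := by rw [← Finset.sum_mul, hp1, one_mul]
        _ ≤ Tstd γ R p M s a := Finset.sum_le_sum fun s' _ => key s'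
    · set c := Tmax γ R N hN U s a with hc
      have key : ∀ s', p s a s' * (R s a s' + γ * qmax (M s')) ≤ p s a s' * c := by
        intro s'
        by_cases hmem : s' ∈ N s a
        · apply mul_le_mul_of_nonneg_left _ (hp0 s a s')
          calc R s a s' + γ * qmax (M s') ≤ R s a s' + γ * qmax (U s') := by
                gcongr
                exact qmax_mono fun a' => (ih s' a').2
            _ ≤ c := by rw [hc]; exact Finset.le_sup' (fun t => R s a t + γ * qmax (U t)) hmem
        · simp [hsupp s a s' hmem]
      calc Tstd γ R p M s a ≤ ∑ s', p s a s' * c := Finset.sum_le_sum fun s' _ => key s'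
        _ = c := by rw [← Finset.sum_mul, hp1, one_mul]
end

section
/- Consecutive differences along the orbit of the M-Q-M upper-bound operator contract by γ: for every Q-function Q, ‖U Q − U(U Q)‖_∞ ≤ γ ‖Q − U Q‖_∞. -/
/-- Supremum norm of a Q-function over finite nonempty `S × A`. -/
noncomputable def supNorm {S A : Type*} [Fintype S] [Fintype A] [Nonempty S] [Nonempty A]
    (Q : S → A → ℝ) : ℝ :=
  Finset.univ.sup' Finset.univ_nonempty fun p : S × A => |Q p.1 p.2|

/-- M-Q-M upper-bound operator `(U Q)(s,a) = min (Q(s,a), (T_max Q)(s,a))`. -/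
noncomputable def Uop {S A : Type*} [Fintype A] [Nonempty A]
    (γ : ℝ) (R : S → A → S → ℝ) (N : S → A → Finset S) (hN : ∀ s a, (N s a).Nonempty)
    (Q : S → A → ℝ) : S → A → ℝ :=
  fun s a => min (Q s a) (Tmax γ R N hN Q s a)

/-- M-Q-M lower-bound operator `(L Q)(s,a) = max (Q(s,a), (T_min Q)(s,a))`. -/
noncomputable def Lop {S A : Type*} [Fintype A] [Nonempty A]
    (γ : ℝ) (R : S → A → S → ℝ) (N : S → A → Finset S) (hN : ∀ s a, (N s a).Nonempty)
    (Q : S → A → ℝ) : S → A → ℝ :=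
  fun s a => max (Q s a) (Tmin γ R N hN Q s a)

/-- Consecutive differences along the orbit of the M-Q-M upper-bound operator `U`
contract by `γ`: `‖U Q − U(U Q)‖_∞ ≤ γ ‖Q − U Q‖_∞`. -/
theorem Uop_orbit_contraction {S A : Type*} [Fintype S] [Fintype A] [Nonempty S] [Nonempty A]
    (γ : ℝ) (hγ0 : 0 ≤ γ) (hγ1 : γ < 1)
    (R : S → A → S → ℝ) (N : S → A → Finset S) (hN : ∀ s a, (N s a).Nonempty)
    (Q : S → A → ℝ) :
    supNorm (fun s a => Uop γ R N hN Q s a - Uop γ R N hN (Uop γ R N hN Q) s a) ≤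
      γ * supNorm (fun s a => Q s a - Uop γ R N hN Q s a) := by
  set Q' := Uop γ R N hN Q with hQ'
  set D := supNorm (fun s a => Q s a - Q' s a) with hD
  have hle : ∀ s a, |Q s a - Q' s a| ≤ D := fun s a =>
    Finset.le_sup' (f := fun p : S × A => |Q p.1 p.2 - Q' p.1 p.2|) (Finset.mem_univ (s, a))
  have hD0 : 0 ≤ D := le_trans (abs_nonneg _) (hle Classical.ofNonempty Classical.ofNonempty)
  -- qmax one-sided bound
  have hqmax : ∀ s' : S, qmax (Q s') ≤ qmax (Q' s') + D := by
    intro s'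
    apply Finset.sup'_le
    intro a _
    have h1 : Q s' a ≤ Q' s' a + D := by
      have := hle s' a
      have := le_abs_self (Q s' a - Q' s' a)
      linarith
    have h2 : Q' s' a ≤ qmax (Q' s') :=
      Finset.le_sup' (f := Q' s') (Finset.mem_univ a)
    linarith
  -- Tmax one-sided contraction
  have hTmax : ∀ s a, Tmax γ R N hN Q s a ≤ Tmax γ R N hN Q' s a + γ * D := by
    intro s a
    apply Finset.sup'_le
    intro s' hs'
    have h1 : R s a s' + γ * qmax (Q' s') ≤ Tmax γ R N hN Q' s a :=
      Finset.le_sup' (f := fun s' => R s a s' + γ * qmax (Q' s')) hs'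
    have h2 : γ * qmax (Q s') ≤ γ * qmax (Q' s') + γ * D := by
      have := hqmax s'
      nlinarith
    linarith
  apply Finset.sup'_le
  rintro ⟨s, a⟩ _
  simp only
  have hU2 : Uop γ R N hN Q' s a ≤ Q' s a := min_le_left _ _
  rw [abs_of_nonneg (by linarith)]
  rcases le_or_gt (Q' s a) (Tmax γ R N hN Q' s a) with h | h
  · have : Uop γ R N hN Q' s a = Q' s a := min_eq_left h
    rw [this]
    simp [mul_nonneg hγ0 hD0]
  · have hmin : Uop γ R N hN Q' s a = Tmax γ R N hN Q' s a := min_eq_right h.le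
    rw [hmin]
    have hQ'le : Q' s a ≤ Tmax γ R N hN Q s a := min_le_right _ _
    have := hTmax s a
    linarith
end

section
/- Consecutive differences along the orbit of the M-Q-M lower-bound operator contract by γ: for every Q-function Q, ‖L Q − L(L Q)‖_∞ ≤ γ ‖Q − L Q‖_∞. -/
/-- Consecutive differences along the orbit of the M-Q-M lower-bound operator `L`
contract by `γ`: `‖L Q − L(L Q)‖_∞ ≤ γ ‖Q − L Q‖_∞`. -/
theorem Lop_orbit_contraction {S A : Type*} [Fintype S] [Fintype A] [Nonempty S] [Nonempty A]
    (γ : ℝ) (hγ0 : 0 ≤ γ) (hγ1 : γ < 1)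
    (R : S → A → S → ℝ) (N : S → A → Finset S) (hN : ∀ s a, (N s a).Nonempty)
    (Q : S → A → ℝ) :
    supNorm (fun s a => Lop γ R N hN Q s a - Lop γ R N hN (Lop γ R N hN Q) s a) ≤
      γ * supNorm (fun s a => Q s a - Lop γ R N hN Q s a) := by
  set LQ := Lop γ R N hN Q with hLQ
  set M := supNorm (fun s a => Q s a - LQ s a) with hM
  -- Q ≤ LQ pointwise
  have hQle : ∀ s a, Q s a ≤ LQ s a := fun s a => le_max_left _ _
  -- pointwise bound: LQ - Q ≤ M
  have hbd : ∀ s a, LQ s a - Q s a ≤ M := by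
    intro s a
    have := Finset.le_sup' (f := fun p : S × A => |Q p.1 p.2 - LQ p.1 p.2|)
      (Finset.mem_univ (s, a))
    calc LQ s a - Q s a ≤ |Q s a - LQ s a| := by
          rw [abs_sub_comm]; exact le_abs_self _
      _ ≤ M := this
  have hM0 : 0 ≤ M := le_trans (abs_nonneg _)
    (Finset.le_sup' (f := fun p : S × A => |Q p.1 p.2 - LQ p.1 p.2|)
      (Finset.mem_univ (Classical.ofNonempty, Classical.ofNonempty)))
  -- qmax bound
  have hqmax : ∀ s' : S, qmax (LQ s') ≤ qmax (Q s') + M := by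
    intro s'
    unfold qmax
    apply Finset.sup'_le
    intro a _
    calc LQ s' a ≤ Q s' a + M := by linarith [hbd s' a]
      _ ≤ qmax (Q s') + M := by
          have := Finset.le_sup' (f := Q s') (Finset.mem_univ a)
          unfold qmax; linarith
  -- Tmin (LQ) ≤ Tmin Q + γ M
  have hTmin : ∀ s a, Tmin γ R N hN LQ s a ≤ Tmin γ R N hN Q s a + γ * M := by
    intro s a
    obtain ⟨s', hs', heq⟩ := Finset.exists_mem_eq_inf' (hN s a)
      (fun s' => R s a s' + γ * qmax (Q s'))
    have h1 : Tmin γ R N hN LQ s a ≤ R s a s' + γ * qmax (LQ s') :=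
      Finset.inf'_le _ hs'
    have h2 : qmax (LQ s') ≤ qmax (Q s') + M := hqmax s'
    have : Tmin γ R N hN Q s a = R s a s' + γ * qmax (Q s') := heq
    nlinarith
  -- LQ ≤ L(LQ)
  have hle2 : ∀ s a, LQ s a ≤ Lop γ R N hN LQ s a := fun s a => le_max_left _ _
  apply Finset.sup'_le
  rintro ⟨s, a⟩ _
  simp only
  rw [abs_sub_comm, abs_of_nonneg (by linarith [hle2 s a])]
  have hTQ : Tmin γ R N hN Q s a ≤ LQ s a := le_max_right _ _
  have : Lop γ R N hN LQ s a ≤ LQ s a + γ * M := by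
    apply max_le
    · nlinarith
    · calc Tmin γ R N hN LQ s a ≤ Tmin γ R N hN Q s a + γ * M := hTmin s a
        _ ≤ LQ s a + γ * M := by linarith
  linarith
end

section
/- The M-Q-M iteration converges to a fixed point: for every initial Q-function Q₀, the sequence Q_k := U^k Q₀ converges in the supremum norm to some Q-function Q_∞ satisfying U Q_∞ = Q_∞; likewise, the sequence L^k Q₀ converges to some fixed point of L. -/
open Filter

section MQMAux

variable {S A : Type*} [Fintype S] [Fintype A] [Nonempty S] [Nonempty A]


lemma le_supNorm (Q : S → A → ℝ) (s : S) (a : A) : |Q s a| ≤ supNorm Q :=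
  Finset.le_sup' (f := fun p : S × A => |Q p.1 p.2|) (Finset.mem_univ (s, a))

lemma supNorm_nonneg (Q : S → A → ℝ) : 0 ≤ supNorm Q :=
  (abs_nonneg _).trans (le_supNorm Q (Classical.arbitrary S) (Classical.arbitrary A))

lemma abs_sup'_sub_sup'_le {ι : Type*} (t : Finset ι) (ht : t.Nonempty) (f g : ι → ℝ) (c : ℝ)
    (h : ∀ i ∈ t, |f i - g i| ≤ c) : |t.sup' ht f - t.sup' ht g| ≤ c := by
  rw [abs_sub_le_iff]
  constructor
  · rw [sub_le_iff_le_add]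
    apply Finset.sup'_le
    intro i hi
    have h1 := (abs_sub_le_iff.mp (h i hi)).1
    have h2 := Finset.le_sup' g hi
    linarith
  · rw [sub_le_iff_le_add]
    apply Finset.sup'_le
    intro i hi
    have h1 := (abs_sub_le_iff.mp (h i hi)).2
    have h2 := Finset.le_sup' f hi
    linarith

lemma abs_inf'_sub_inf'_le {ι : Type*} (t : Finset ι) (ht : t.Nonempty) (f g : ι → ℝ) (c : ℝ)
    (h : ∀ i ∈ t, |f i - g i| ≤ c) : |t.inf' ht f - t.inf' ht g| ≤ c := by
  rw [abs_sub_le_iff]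
  constructor
  · obtain ⟨i, hi, hgi⟩ := t.exists_mem_eq_inf' ht g
    have h1 := (abs_sub_le_iff.mp (h i hi)).1
    have h2 := Finset.inf'_le f hi
    rw [hgi]; linarith
  · obtain ⟨i, hi, hfi⟩ := t.exists_mem_eq_inf' ht f
    have h1 := (abs_sub_le_iff.mp (h i hi)).2
    have h2 := Finset.inf'_le g hi
    rw [hfi]; linarith

lemma supNorm_tendsto_zero (f : ℕ → S → A → ℝ) (q : S → A → ℝ)
    (h : ∀ s a, Tendsto (fun k => f k s a) atTop (nhds (q s a))) :
    Tendsto (fun k => supNorm (fun s a => f k s a - q s a)) atTop (nhds 0) := by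
  apply squeeze_zero (fun k => supNorm_nonneg _)
    (g := fun k => ∑ p : S × A, |f k p.1 p.2 - q p.1 p.2|)
  · intro k
    apply Finset.sup'_le
    intro p hp
    exact Finset.single_le_sum (f := fun p : S × A => |f k p.1 p.2 - q p.1 p.2|)
      (fun r _ => abs_nonneg _) hp
  · have : Tendsto (fun k => ∑ p : S × A, |f k p.1 p.2 - q p.1 p.2|) atTop
        (nhds (∑ _p : S × A, (0:ℝ))) := by
      apply tendsto_finset_sum
      intro p _
      have h0 := ((h p.1 p.2).sub (tendsto_const_nhds (x := q p.1 p.2))).abs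
      simpa using h0
    simpa using this

lemma mono_converge (F : (S → A → ℝ) → (S → A → ℝ)) (Q₀ : S → A → ℝ)
    (hdec : ∀ (Q : S → A → ℝ) s a, F Q s a ≤ Q s a)
    (hbd : ∃ M : ℝ, ∀ k s a, -M ≤ F^[k] Q₀ s a)
    (hnonexp : ∀ (Q Q' : S → A → ℝ) s a,
      |F Q s a - F Q' s a| ≤ supNorm (fun s a => Q s a - Q' s a)) :
    ∃ Qinf : S → A → ℝ, F Qinf = Qinf ∧
      Tendsto (fun k : ℕ => supNorm (fun s a => F^[k] Q₀ s a - Qinf s a)) atTop (nhds 0) := by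
  obtain ⟨M, hM⟩ := hbd
  have hanti : ∀ s a, Antitone fun k => F^[k] Q₀ s a := by
    intro s a
    apply antitone_nat_of_succ_le
    intro k
    rw [Function.iterate_succ_apply']
    exact hdec _ s a
  set Qinf : S → A → ℝ := fun s a => ⨅ k, F^[k] Q₀ s a with hQinf
  have hpt : ∀ s a, Tendsto (fun k => F^[k] Q₀ s a) atTop (nhds (Qinf s a)) := by
    intro s a
    exact tendsto_atTop_ciInf (hanti s a) ⟨-M, by rintro x ⟨k, rfl⟩; exact hM k s a⟩
  have hsn := supNorm_tendsto_zero _ _ hpt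
  refine ⟨Qinf, ?_, hsn⟩
  funext s a
  have h1 : Tendsto (fun k => F (F^[k] Q₀) s a) atTop (nhds (Qinf s a)) := by
    have h := (hpt s a).comp (tendsto_add_atTop_nat 1)
    have he : ((fun k => F^[k] Q₀ s a) ∘ (· + 1)) = fun k => F (F^[k] Q₀) s a :=
      funext fun k => by simp [Function.iterate_succ_apply']
    rwa [he] at h
  have h2 : Tendsto (fun k => F (F^[k] Q₀) s a) atTop (nhds (F Qinf s a)) := by
    rw [← tendsto_sub_nhds_zero_iff]
    apply squeeze_zero_norm (fun k => ?_) hsn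
    exact hnonexp _ _ s a
  exact tendsto_nhds_unique h2 h1


lemma le_qmax (f : A → ℝ) (a : A) : f a ≤ qmax f :=
  Finset.le_sup' f (Finset.mem_univ a)

lemma qmax_le (f : A → ℝ) (c : ℝ) (h : ∀ a, f a ≤ c) : qmax f ≤ c :=
  Finset.sup'_le _ _ fun a _ => h a

lemma abs_qmax_sub_qmax_le (f g : A → ℝ) (c : ℝ) (h : ∀ a, |f a - g a| ≤ c) :
    |qmax f - qmax g| ≤ c :=
  abs_sup'_sub_sup'_le _ _ f g c fun a _ => h a

lemma supNorm_congr (f g : S → A → ℝ) (h : ∀ s a, |f s a| = |g s a|) :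
    supNorm f = supNorm g :=
  Finset.sup'_congr _ rfl fun p _ => h p.1 p.2

variable (γ : ℝ) (R : S → A → S → ℝ) (N : S → A → Finset S) (hN : ∀ s a, (N s a).Nonempty)

lemma Tmax_nonexp (hγ0 : 0 ≤ γ) (hγ1 : γ < 1) (Q Q' : S → A → ℝ) (s : S) (a : A) :
    |Tmax γ R N hN Q s a - Tmax γ R N hN Q' s a| ≤ supNorm (fun s a => Q s a - Q' s a) := by
  set d := supNorm (fun s a => Q s a - Q' s a) with hd
  have hd0 : 0 ≤ d := supNorm_nonneg _
  apply abs_sup'_sub_sup'_le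
  intro s' _
  have hq : |qmax (Q s') - qmax (Q' s')| ≤ d :=
    abs_qmax_sub_qmax_le _ _ _ fun a' => le_supNorm (fun s a => Q s a - Q' s a) s' a'
  have : R s a s' + γ * qmax (Q s') - (R s a s' + γ * qmax (Q' s')) =
      γ * (qmax (Q s') - qmax (Q' s')) := by ring
  rw [this, abs_mul, abs_of_nonneg hγ0]
  nlinarith [abs_nonneg (qmax (Q s') - qmax (Q' s'))]

lemma Tmin_nonexp (hγ0 : 0 ≤ γ) (hγ1 : γ < 1) (Q Q' : S → A → ℝ) (s : S) (a : A) :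
    |Tmin γ R N hN Q s a - Tmin γ R N hN Q' s a| ≤ supNorm (fun s a => Q s a - Q' s a) := by
  set d := supNorm (fun s a => Q s a - Q' s a) with hd
  have hd0 : 0 ≤ d := supNorm_nonneg _
  apply abs_inf'_sub_inf'_le
  intro s' _
  have hq : |qmax (Q s') - qmax (Q' s')| ≤ d :=
    abs_qmax_sub_qmax_le _ _ _ fun a' => le_supNorm (fun s a => Q s a - Q' s a) s' a'
  have : R s a s' + γ * qmax (Q s') - (R s a s' + γ * qmax (Q' s')) =
      γ * (qmax (Q s') - qmax (Q' s')) := by ring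
  rw [this, abs_mul, abs_of_nonneg hγ0]
  nlinarith [abs_nonneg (qmax (Q s') - qmax (Q' s'))]

lemma Uop_nonexp (hγ0 : 0 ≤ γ) (hγ1 : γ < 1) (Q Q' : S → A → ℝ) (s : S) (a : A) :
    |Uop γ R N hN Q s a - Uop γ R N hN Q' s a| ≤ supNorm (fun s a => Q s a - Q' s a) := by
  refine (abs_min_sub_min_le_max _ _ _ _).trans (max_le ?_ ?_)
  · exact le_supNorm (fun s a => Q s a - Q' s a) s a
  · exact Tmax_nonexp γ R N hN hγ0 hγ1 Q Q' s a

lemma Lop_nonexp (hγ0 : 0 ≤ γ) (hγ1 : γ < 1) (Q Q' : S → A → ℝ) (s : S) (a : A) :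
    |Lop γ R N hN Q s a - Lop γ R N hN Q' s a| ≤ supNorm (fun s a => Q s a - Q' s a) := by
  refine (abs_max_sub_max_le_max _ _ _ _).trans (max_le ?_ ?_)
  · exact le_supNorm (fun s a => Q s a - Q' s a) s a
  · exact Tmin_nonexp γ R N hN hγ0 hγ1 Q Q' s a

end MQMAux
/-- The M-Q-M iteration converges: for any initial `Q₀`, the iterates `U^k Q₀` converge in
supremum norm to a fixed point of `U`, and likewise `L^k Q₀` converge to a fixed point of `L`. -/
theorem mqm_iteration_converges {S A : Type*} [Fintype S] [Fintype A] [Nonempty S] [Nonempty A]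
    (γ : ℝ) (hγ0 : 0 ≤ γ) (hγ1 : γ < 1)
    (R : S → A → S → ℝ) (N : S → A → Finset S) (hN : ∀ s a, (N s a).Nonempty)
    (Q₀ : S → A → ℝ) :
    (∃ Qinf : S → A → ℝ, Uop γ R N hN Qinf = Qinf ∧
        Filter.Tendsto (fun k : ℕ => supNorm (fun s a => (Uop γ R N hN)^[k] Q₀ s a - Qinf s a))
          Filter.atTop (nhds 0)) ∧
      (∃ Qinf' : S → A → ℝ, Lop γ R N hN Qinf' = Qinf' ∧
        Filter.Tendsto (fun k : ℕ => supNorm (fun s a => (Lop γ R N hN)^[k] Q₀ s a - Qinf' s a))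
          Filter.atTop (nhds 0)) := by

  -- the constant bounding rewards
  set CR : ℝ := Finset.univ.sup' Finset.univ_nonempty
    (fun p : S × A × S => |R p.1 p.2.1 p.2.2|) with hCR
  have hCR0 : ∀ s a s', |R s a s'| ≤ CR := fun s a s' =>
    Finset.le_sup' (f := fun p : S × A × S => |R p.1 p.2.1 p.2.2|) (Finset.mem_univ (s, a, s'))
  set M : ℝ := max (supNorm Q₀) (CR / (1 - γ)) with hM
  have h1γ : 0 < 1 - γ := by linarith
  have hMQ : ∀ s a, |Q₀ s a| ≤ M := fun s a => (le_supNorm Q₀ s a).trans (le_max_left _ _)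
  have hCRM : CR ≤ (1 - γ) * M := by
    have : CR / (1 - γ) ≤ M := le_max_right _ _
    calc CR = (1 - γ) * (CR / (1 - γ)) := by field_simp
    _ ≤ (1 - γ) * M := by nlinarith
  have hM0 : 0 ≤ M := by
    have := abs_nonneg (Q₀ (Classical.arbitrary S) (Classical.arbitrary A))
    have := hMQ (Classical.arbitrary S) (Classical.arbitrary A)
    linarith
  constructor
  · -- U part
    apply mono_converge
    · intro Q s a
      exact min_le_left _ _
    · refine ⟨M, ?_⟩
      intro k
      induction k with
      | zero =>
        intro s a
        have := (abs_le.mp (hMQ s a)).1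
        simpa using this
      | succ k ih =>
        intro s a
        rw [Function.iterate_succ_apply']
        set Q := (Uop γ R N hN)^[k] Q₀
        refine le_min (ih s a) ?_
        obtain ⟨s', hs'⟩ := hN s a
        refine le_trans ?_ (Finset.le_sup' (fun s' => R s a s' + γ * qmax (Q s')) hs')
        have h1 : -CR ≤ R s a s' := (abs_le.mp (hCR0 s a s')).1
        have h2 : -M ≤ qmax (Q s') := (ih s' (Classical.arbitrary A)).trans
          (le_qmax (Q s') (Classical.arbitrary A))
        nlinarith
    · exact Uop_nonexp γ R N hN hγ0 hγ1
  · -- L part via negation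
    set L := Lop γ R N hN with hL
    set G : (S → A → ℝ) → (S → A → ℝ) := fun Q s a => -L (fun s a => -Q s a) s a with hG
    have hGiter : ∀ k : ℕ, G^[k] (fun s a => -Q₀ s a) = fun s a => -L^[k] Q₀ s a := by
      intro k
      induction k with
      | zero => simp
      | succ k ih =>
        rw [Function.iterate_succ_apply', Function.iterate_succ_apply', ih]
        funext s a
        simp only [hG]
        congr 1
        have : (fun s a => - - L^[k] Q₀ s a) = L^[k] Q₀ := by funext s a; simp
        rw [this]
    have hLbd : ∀ (Q : S → A → ℝ), (∀ s a, Q s a ≤ M) → ∀ s a, L Q s a ≤ M := by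
      intro Q hQ s a
      refine max_le (hQ s a) ?_
      obtain ⟨s', hs'⟩ := hN s a
      refine le_trans (Finset.inf'_le (fun s' => R s a s' + γ * qmax (Q s')) hs') ?_
      have h1 : R s a s' ≤ CR := (abs_le.mp (hCR0 s a s')).2
      have h2 : qmax (Q s') ≤ M := qmax_le _ _ fun a' => hQ s' a'
      nlinarith
    obtain ⟨Qi, hfix, htend⟩ := mono_converge G (fun s a => -Q₀ s a)
      (by
        intro Q s a
        simp only [hG]
        have := le_max_left (-Q s a) (Tmin γ R N hN (fun s a => -Q s a) s a)
        have h : -Q s a ≤ L (fun s a => -Q s a) s a := this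
        linarith)
      (by
        refine ⟨M, ?_⟩
        intro k
        have hk : ∀ s a, L^[k] Q₀ s a ≤ M := by
          induction k with
          | zero =>
            intro s a
            simpa using (abs_le.mp (hMQ s a)).2
          | succ k ih =>
            intro s a
            rw [Function.iterate_succ_apply']
            exact hLbd _ ih s a
        intro s a
        rw [hGiter k]
        simpa using hk s a)
      (by
        intro Q Q' s a
        simp only [hG]
        have h := Lop_nonexp γ R N hN hγ0 hγ1 (fun s a => -Q s a) (fun s a => -Q' s a) s a
        have he : supNorm (fun s a => -Q s a - -Q' s a) = supNorm (fun s a => Q s a - Q' s a) :=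
          supNorm_congr _ _ fun s a => by rw [show -Q s a - -Q' s a = -(Q s a - Q' s a) by ring,
            abs_neg]
        rw [← he]
        calc |-L (fun s a => -Q s a) s a - -L (fun s a => -Q' s a) s a|
            = |L (fun s a => -Q s a) s a - L (fun s a => -Q' s a) s a| := by
              rw [show -L (fun s a => -Q s a) s a - -L (fun s a => -Q' s a) s a
                = -(L (fun s a => -Q s a) s a - L (fun s a => -Q' s a) s a) by ring, abs_neg]
          _ ≤ _ := h)
    refine ⟨fun s a => -Qi s a, ?_, ?_⟩
    · funext s a
      have h := congrFun (congrFun hfix s) a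
      simp only [hG] at h
      have he : (fun s a => - -Qi s a) = Qi := by funext s a; simp
      rw [show (fun s a => -Qi s a) = fun s a => -Qi s a from rfl]
      calc L (fun s a => -Qi s a) s a = - -L (fun s a => -Qi s a) s a := by ring
        _ = -Qi s a := by rw [h]
    · have he : ∀ k : ℕ, supNorm (fun s a => L^[k] Q₀ s a - -Qi s a)
          = supNorm (fun s a => G^[k] (fun s a => -Q₀ s a) s a - Qi s a) := by
        intro k
        rw [hGiter k]
        exact supNorm_congr _ _ fun s a => by
          rw [show -L^[k] Q₀ s a - Qi s a = -(L^[k] Q₀ s a - -Qi s a) by ring, abs_neg]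
      simpa only [he] using htend
end

section
/- The fixed point of the M-Q-M iteration is not unique: if Q is a fixed point of U (i.e., U Q = Q), then for every constant c ≥ 0 the Q-function Q − c (subtracting c pointwise) is also a fixed point of U; dually, if Q is a fixed point of L, then Q + c is a fixed point of L for every c ≥ 0. In particular, U and L each admit more than one fixed point. -/
/-!
Adding a constant `c` to `Q` adds `γ * c` to `T_max Q` and `T_min Q`, while `U Q = Q` just says
`Q ≤ T_max Q` (and `L Q = Q` says `T_min Q ≤ Q`). As `γ * c ≤ c` for `c ≥ 0`, lowering a fixed
point of `U` by `c` keeps it below `T_max`, and dually for `L`. Fixed points exist: a constant `q`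
with `(1 - γ) * q ≤ R` everywhere is one for `U`, and one with `R ≤ (1 - γ) * q` is one for `L`.
-/

theorem qmax_add_const {I : Type*} [Fintype I] [Nonempty I] (f : I → ℝ) (c : ℝ) :
    qmax (fun i => f i + c) = qmax f + c :=
  (Finset.sup'_add _ f c _).symm

theorem qmax_const {I : Type*} [Fintype I] [Nonempty I] (c : ℝ) : qmax (fun _ : I => c) = c :=
  Finset.sup'_const _ c

section Shift

variable {S A : Type*} [Fintype A] [Nonempty A] {γ : ℝ} {R : S → A → S → ℝ}
  {N : S → A → Finset S} {hN : ∀ s a, (N s a).Nonempty}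

theorem Tmax_add_const (Q : S → A → ℝ) (c : ℝ) (s : S) (a : A) :
    Tmax γ R N hN (fun s a => Q s a + c) s a = Tmax γ R N hN Q s a + γ * c := by
  simp only [Tmax, qmax_add_const, mul_add, ← add_assoc, Finset.sup'_add]

theorem Tmin_add_const (Q : S → A → ℝ) (c : ℝ) (s : S) (a : A) :
    Tmin γ R N hN (fun s a => Q s a + c) s a = Tmin γ R N hN Q s a + γ * c := by
  simp only [Tmin, qmax_add_const, mul_add, ← add_assoc]
  exact (map_finset_inf' (OrderIso.addRight (γ * c)) (hN s a) _).symm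

theorem Uop_eq_self_iff {Q : S → A → ℝ} :
    Uop γ R N hN Q = Q ↔ ∀ s a, Q s a ≤ Tmax γ R N hN Q s a := by
  simp only [funext_iff, Uop, min_eq_left_iff]

theorem Lop_eq_self_iff {Q : S → A → ℝ} :
    Lop γ R N hN Q = Q ↔ ∀ s a, Tmin γ R N hN Q s a ≤ Q s a := by
  simp only [funext_iff, Lop, max_eq_left_iff]

theorem Uop_sub_const_eq_self (hγ : γ ≤ 1) {Q : S → A → ℝ} {c : ℝ} (hc : 0 ≤ c)
    (hQ : Uop γ R N hN Q = Q) :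
    Uop γ R N hN (fun s a => Q s a - c) = fun s a => Q s a - c := by
  rw [Uop_eq_self_iff] at hQ ⊢
  intro s a
  have hγc : γ * c ≤ c := mul_le_of_le_one_left hc hγ
  simp only [sub_eq_add_neg, Tmax_add_const, mul_neg]
  linarith [hQ s a]

theorem Lop_add_const_eq_self (hγ : γ ≤ 1) {Q : S → A → ℝ} {c : ℝ} (hc : 0 ≤ c)
    (hQ : Lop γ R N hN Q = Q) :
    Lop γ R N hN (fun s a => Q s a + c) = fun s a => Q s a + c := by
  rw [Lop_eq_self_iff] at hQ ⊢
  intro s a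
  have hγc : γ * c ≤ c := mul_le_of_le_one_left hc hγ
  rw [Tmin_add_const]
  linarith [hQ s a]

theorem Uop_const_eq_self {q : ℝ} (hq : ∀ s a s', q ≤ R s a s' + γ * q) :
    Uop γ R N hN (fun _ _ => q) = fun _ _ => q := by
  refine Uop_eq_self_iff.2 fun s a => ?_
  obtain ⟨s', hs'⟩ := hN s a
  simp only [Tmax, qmax_const]
  exact Finset.le_sup'_of_le _ hs' (hq s a s')

theorem Lop_const_eq_self {q : ℝ} (hq : ∀ s a s', R s a s' + γ * q ≤ q) :
    Lop γ R N hN (fun _ _ => q) = fun _ _ => q := by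
  refine Lop_eq_self_iff.2 fun s a => ?_
  obtain ⟨s', hs'⟩ := hN s a
  simp only [Tmin, qmax_const]
  exact Finset.inf'_le_of_le _ hs' (hq s a s')

end Shift

theorem exists_le_add_mul_self {ι : Type*} [Finite ι] (f : ι → ℝ) {γ : ℝ} (hγ : γ < 1) :
    ∃ q, ∀ i, q ≤ f i + γ * q := by
  obtain ⟨m, hm⟩ := (Set.finite_range f).bddBelow
  refine ⟨m / (1 - γ), fun i => ?_⟩
  have hq : m / (1 - γ) - γ * (m / (1 - γ)) = m := by field_simp [(sub_pos.2 hγ).ne']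
  linarith [hm (Set.mem_range_self i)]

theorem exists_add_mul_self_le {ι : Type*} [Finite ι] (f : ι → ℝ) {γ : ℝ} (hγ : γ < 1) :
    ∃ q, ∀ i, f i + γ * q ≤ q := by
  obtain ⟨q, hq⟩ := exists_le_add_mul_self (fun i => -f i) hγ
  exact ⟨-q, fun i => by linarith [hq i]⟩

theorem mqm_fixed_point_not_unique_general {S A : Type*} [Fintype S] [Fintype A] [Nonempty S] [Nonempty A]
    (γ : ℝ) (hγ1 : γ < 1)
    (R : S → A → S → ℝ) (N : S → A → Finset S) (hN : ∀ s a, (N s a).Nonempty) :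
    (∀ (Q : S → A → ℝ) (c : ℝ), 0 ≤ c → Uop γ R N hN Q = Q →
        Uop γ R N hN (fun s a => Q s a - c) = fun s a => Q s a - c) ∧
      (∀ (Q : S → A → ℝ) (c : ℝ), 0 ≤ c → Lop γ R N hN Q = Q →
        Lop γ R N hN (fun s a => Q s a + c) = fun s a => Q s a + c) ∧
      (∃ Q₁ Q₂ : S → A → ℝ, Uop γ R N hN Q₁ = Q₁ ∧ Uop γ R N hN Q₂ = Q₂ ∧ Q₁ ≠ Q₂) ∧
      (∃ Q₁ Q₂ : S → A → ℝ, Lop γ R N hN Q₁ = Q₁ ∧ Lop γ R N hN Q₂ = Q₂ ∧ Q₁ ≠ Q₂) := by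
  have hne : ∀ q : ℝ, (fun _ _ => q : S → A → ℝ) ≠ fun _ _ => q + 1 := by
    simp [funext_iff]
  refine ⟨fun Q c hc hQ => Uop_sub_const_eq_self hγ1.le hc hQ,
    fun Q c hc hQ => Lop_add_const_eq_self hγ1.le hc hQ, ?_, ?_⟩
  · obtain ⟨q, hq⟩ := exists_le_add_mul_self (fun p : S × A × S => R p.1 p.2.1 p.2.2) hγ1
    have hfix := Uop_const_eq_self (N := N) (hN := hN) fun s a s' => hq (s, a, s')
    have hfix' := Uop_sub_const_eq_self hγ1.le zero_le_one hfix
    exact ⟨_, _, hfix', hfix, by simpa using hne (q - 1)⟩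
  · obtain ⟨q, hq⟩ := exists_add_mul_self_le (fun p : S × A × S => R p.1 p.2.1 p.2.2) hγ1
    have hfix := Lop_const_eq_self (N := N) (hN := hN) fun s a s' => hq (s, a, s')
    exact ⟨_, _, hfix, Lop_add_const_eq_self hγ1.le zero_le_one hfix, hne q⟩

/-- Non-uniqueness of M-Q-M fixed points: fixed points of `U` are preserved under subtracting a
nonnegative constant, fixed points of `L` under adding one; in particular, `U` and `L` each
admit more than one fixed point. -/
theorem mqm_fixed_point_not_unique {S A : Type*} [Fintype S] [Fintype A] [Nonempty S] [Nonempty A]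
    (γ : ℝ) (hγ0 : 0 ≤ γ) (hγ1 : γ < 1)
    (R : S → A → S → ℝ) (N : S → A → Finset S) (hN : ∀ s a, (N s a).Nonempty) :
    (∀ (Q : S → A → ℝ) (c : ℝ), 0 ≤ c → Uop γ R N hN Q = Q →
        Uop γ R N hN (fun s a => Q s a - c) = fun s a => Q s a - c) ∧
      (∀ (Q : S → A → ℝ) (c : ℝ), 0 ≤ c → Lop γ R N hN Q = Q →
        Lop γ R N hN (fun s a => Q s a + c) = fun s a => Q s a + c) ∧
      (∃ Q₁ Q₂ : S → A → ℝ, Uop γ R N hN Q₁ = Q₁ ∧ Uop γ R N hN Q₂ = Q₂ ∧ Q₁ ≠ Q₂) ∧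
      (∃ Q₁ Q₂ : S → A → ℝ, Lop γ R N hN Q₁ = Q₁ ∧ Lop γ R N hN Q₂ = Q₂ ∧ Q₁ ≠ Q₂) :=
  mqm_fixed_point_not_unique_general γ hγ1 R N hN
end

section
/- Upper bound for a nonnegative linear combination of rewards: let R₁, …, R_n : S × A × S → ℝ be reward functions and c₁, …, c_n ≥ 0. Let Q_i* be the fixed point of the optimal Bellman operator with reward R_i (T*_{R_i} Q_i* = Q_i*) and let Q* be the fixed point of the optimal Bellman operator with reward 𝓡 = Σ_i c_i R_i. Then Q* ≤ Σ_i c_i Q_i* pointwise. -/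
/-- Upper bound for a nonnegative linear combination of rewards:
if `T*_{R_i} Q_i* = Q_i*` for each `i` and `Q*` is the fixed point of the optimal Bellman
operator with reward `𝓡 = Σ_i c_i R_i`, with `c_i ≥ 0`, then `Q* ≤ Σ_i c_i Q_i*` pointwise. -/
theorem linear_combination_upper_bound {S A : Type*} [Fintype S] [Fintype A]
    [Nonempty S] [Nonempty A]
    (γ : ℝ) (hγ0 : 0 ≤ γ) (hγ1 : γ < 1)
    (p : S → A → S → ℝ)
    (hp0 : ∀ s a s', 0 ≤ p s a s') (hp1 : ∀ s a, ∑ s', p s a s' = 1)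
    (n : ℕ) (R : Fin n → S → A → S → ℝ) (c : Fin n → ℝ) (hc : ∀ i, 0 ≤ c i)
    (Qi : Fin n → S → A → ℝ) (hQi : ∀ i, Tstd γ (R i) p (Qi i) = Qi i)
    (Qstar : S → A → ℝ)
    (hQstar : Tstd γ (fun s a s' => ∑ i, c i * R i s a s') p Qstar = Qstar) :
    ∀ s a, Qstar s a ≤ ∑ i, c i * Qi i s a := by
  -- abbreviation
  set Qbar : S → A → ℝ := fun s a => ∑ i, c i * Qi i s a with hQbar
  set D : S × A → ℝ := fun x => Qstar x.1 x.2 - Qbar x.1 x.2 with hD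
  have hne : (Finset.univ : Finset (S × A)).Nonempty := Finset.univ_nonempty
  set M : ℝ := Finset.univ.sup' hne D with hM
  have hMle : ∀ s a, D (s, a) ≤ M := fun s a => Finset.le_sup' D (Finset.mem_univ _)
  -- expansion of Qbar via fixed points
  have h2 : ∀ s a, Qbar s a
      = ∑ s', p s a s' * ((∑ i, c i * R i s a s') + γ * ∑ i, c i * qmax (Qi i s')) := by
    intro s a
    have hfix : ∀ i, Qi i s a = ∑ s', p s a s' * (R i s a s' + γ * qmax (Qi i s')) := by
      intro i
      conv_lhs => rw [← hQi i]
      rfl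
    calc Qbar s a = ∑ i, c i * ∑ s', p s a s' * (R i s a s' + γ * qmax (Qi i s')) := by
          simp only [hQbar]
          exact Finset.sum_congr rfl fun i _ => by rw [hfix i]
      _ = ∑ s', ∑ i, c i * (p s a s' * (R i s a s' + γ * qmax (Qi i s'))) := by
          rw [Finset.sum_comm]
          exact Finset.sum_congr rfl fun i _ => Finset.mul_sum _ _ _
      _ = ∑ s', p s a s' * ((∑ i, c i * R i s a s') + γ * ∑ i, c i * qmax (Qi i s')) := by
          refine Finset.sum_congr rfl fun s' _ => ?_
          rw [Finset.mul_sum Finset.univ (fun i => c i * qmax (Qi i s')) γ,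
            ← Finset.sum_add_distrib, Finset.mul_sum]
          exact Finset.sum_congr rfl fun i _ => by ring
  -- the contraction-type bound
  have hbound : ∀ s a, D (s, a) ≤ γ * M := by
    intro s a
    have h1 : Qstar s a
        = ∑ s', p s a s' * ((∑ i, c i * R i s a s') + γ * qmax (Qstar s')) := by
      conv_lhs => rw [← hQstar]
      rfl
    have hdiff : D (s, a)
        = ∑ s', p s a s' * (γ * (qmax (Qstar s') - ∑ i, c i * qmax (Qi i s'))) := by
      simp only [hD, h1, h2 s a, ← Finset.sum_sub_distrib]
      exact Finset.sum_congr rfl fun s' _ => by ring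
    have hqstep : ∀ s' : S, qmax (Qstar s') - ∑ i, c i * qmax (Qi i s') ≤ M := by
      intro s'
      rw [sub_le_iff_le_add]
      refine Finset.sup'_le _ _ fun a' _ => ?_
      have h3 : Qstar s' a' ≤ M + Qbar s' a' := by
        have := hMle s' a'
        simp only [hD] at this
        linarith
      have h4 : Qbar s' a' ≤ ∑ i, c i * qmax (Qi i s') := by
        refine Finset.sum_le_sum fun i _ => ?_
        exact mul_le_mul_of_nonneg_left (Finset.le_sup' (Qi i s') (Finset.mem_univ a')) (hc i)
      linarith
    calc D (s, a) = ∑ s', p s a s' * (γ * (qmax (Qstar s') - ∑ i, c i * qmax (Qi i s'))) :=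
          hdiff
      _ ≤ ∑ s', p s a s' * (γ * M) := by
          refine Finset.sum_le_sum fun s' _ => ?_
          exact mul_le_mul_of_nonneg_left
            (mul_le_mul_of_nonneg_left (hqstep s') hγ0) (hp0 s a s')
      _ = γ * M := by rw [← Finset.sum_mul, hp1 s a, one_mul]
  -- conclude M ≤ 0
  obtain ⟨x, -, hx⟩ := Finset.exists_mem_eq_sup' hne D
  have hMγ : M ≤ γ * M := by
    calc M = D x := hM.trans hx
      _ = D (x.1, x.2) := by rfl
      _ ≤ γ * M := hbound x.1 x.2
  have hM0 : M ≤ 0 := by nlinarith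
  intro s a
  have := hMle s a
  simp only [hD] at this
  simp only [hQbar] at this
  linarith
end

section
/- Lower bound for a nonnegative linear combination of rewards: let R₁, …, R_n : S × A × S → ℝ be reward functions and c₁, …, c_n ≥ 0. Let Q_i* be the fixed point of the optimal Bellman operator with reward R_i, let Q_i^μ be the fixed point of the pessimistic Bellman operator with reward R_i, and let Q* be the fixed point of the optimal Bellman operator with reward 𝓡 = Σ_i c_i R_i. Then for every index i, c_i Q_i* + Σ_{j ≠ i} c_j Q_j^μ ≤ Q* pointwise; consequently max_i [c_i Q_i* + Σ_{j ≠ i} c_j Q_j^μ] ≤ Q* pointwise. -/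
/-- Minimum of a real-valued function over a nonempty finite type. -/
noncomputable def qmin {I : Type*} [Fintype I] [Nonempty I] (f : I → ℝ) : ℝ :=
  Finset.univ.inf' Finset.univ_nonempty f

/-- Pessimistic Bellman operator:
`(T^μ Q)(s,a) = Σ_{s'} p(s'|s,a) [R(s,a,s') + γ min_{a'} Q(s',a')]`. -/
noncomputable def Tmu {S A : Type*} [Fintype S] [Fintype A] [Nonempty A]
    (γ : ℝ) (R : S → A → S → ℝ) (p : S → A → S → ℝ) (Q : S → A → ℝ) : S → A → ℝ :=
  fun s a => ∑ s', p s a s' * (R s a s' + γ * qmin (Q s'))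

/-!
The reward-weighted sum `G = c_i Q_i* + Σ_{j ≠ i} c_j Q_j^μ` is a subsolution of the optimal
Bellman operator for `𝓡 = Σ_j c_j R_j`: each summand is a one-step backup of its own reward,
backups are linear in the pair (reward, next-state value), and at an action maximising `Q_i*`
the next-state values `max Q_i*` and `min Q_j^μ` are all attained or undercut, so the combined
next-state value is at most `max G`. A subsolution of a monotone `γ`-contraction lies below
its fixed point: if `D = max (G - Q*)` then `D ≤ γ D`, so `D ≤ 0`.
-/

open Finset

section QExtrema

variable {I : Type*} [Fintype I] [Nonempty I]

theorem le_qmax_s18 (f : I → ℝ) (i : I) : f i ≤ qmax f :=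
  le_sup' f (mem_univ i)

theorem qmin_le (f : I → ℝ) (i : I) : qmin f ≤ f i :=
  inf'_le f (mem_univ i)

theorem exists_qmax_eq (f : I → ℝ) : ∃ i, qmax f = f i := by
  obtain ⟨i, -, hi⟩ := exists_mem_eq_sup' univ_nonempty f
  exact ⟨i, hi⟩

theorem qmax_le_qmax_add {f g : I → ℝ} {D : ℝ} (h : ∀ i, f i ≤ g i + D) :
    qmax f ≤ qmax g + D :=
  sup'_le _ _ fun i _ => (h i).trans (add_le_add_left (le_qmax_s18 g i) D)

end QExtrema

section BellmanBackup

variable {S A : Type*} [Fintype S]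

/-- `Tstd` and `Tmu` are the backups of `V s' = max_{a'} Q(s', a')` and `min_{a'} Q(s', a')`. -/
noncomputable def bellmanBackup (γ : ℝ) (R : S → A → S → ℝ) (p : S → A → S → ℝ) (V : S → ℝ) :
    S → A → ℝ :=
  fun s a => ∑ s', p s a s' * (R s a s' + γ * V s')

variable {γ : ℝ} {p : S → A → S → ℝ}

theorem sum_mul_bellmanBackup {ι : Type*} [Fintype ι] (c : ι → ℝ) (R : ι → S → A → S → ℝ)
    (V : ι → S → ℝ) (s : S) (a : A) :
    ∑ j, c j * bellmanBackup γ (R j) p (V j) s a =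
      bellmanBackup γ (fun s a s' => ∑ j, c j * R j s a s') p (fun s' => ∑ j, c j * V j s')
        s a := by
  simp only [bellmanBackup, mul_sum, mul_add, sum_add_distrib]
  rw [sum_comm (f := fun j s' => c j * (p s a s' * R j s a s')),
    sum_comm (f := fun j s' => c j * (p s a s' * (γ * V j s')))]
  congr 1 <;> refine sum_congr rfl fun s' _ => sum_congr rfl fun j _ => by ring

theorem bellmanBackup_mono (hγ0 : 0 ≤ γ) (hp0 : ∀ s a s', 0 ≤ p s a s') (R : S → A → S → ℝ)
    {V V' : S → ℝ} (hV : V ≤ V') : bellmanBackup γ R p V ≤ bellmanBackup γ R p V' :=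
  fun s a => sum_le_sum fun s' _ =>
    mul_le_mul_of_nonneg_left (add_le_add_right (mul_le_mul_of_nonneg_left (hV s') hγ0) _)
      (hp0 s a s')

theorem bellmanBackup_add_const (hp1 : ∀ s a, ∑ s', p s a s' = 1) (R : S → A → S → ℝ)
    (V : S → ℝ) (D : ℝ) (s : S) (a : A) :
    bellmanBackup γ R p (fun s' => V s' + D) s a = bellmanBackup γ R p V s a + γ * D := by
  simp only [bellmanBackup, mul_add, sum_add_distrib, ← sum_mul, hp1, one_mul]
  ring

end BellmanBackup

section OptimalBellman

variable {S A : Type*} [Fintype S] [Fintype A] [Nonempty A] {γ : ℝ} {p : S → A → S → ℝ}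

theorem Tstd_eq_bellmanBackup (R : S → A → S → ℝ) (Q : S → A → ℝ) :
    Tstd γ R p Q = bellmanBackup γ R p fun s' => qmax (Q s') :=
  rfl

theorem le_fixedPoint_of_le_Tstd (hγ0 : 0 ≤ γ) (hγ1 : γ < 1) (hp0 : ∀ s a s', 0 ≤ p s a s')
    (hp1 : ∀ s a, ∑ s', p s a s' = 1) {R : S → A → S → ℝ} {G Q : S → A → ℝ}
    (hG : G ≤ Tstd γ R p G) (hQ : Tstd γ R p Q = Q) : G ≤ Q := by
  intro s₀ a₀
  have : Nonempty S := ⟨s₀⟩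
  obtain ⟨⟨s₁, a₁⟩, hmax⟩ := Finite.exists_max fun x : S × A => G x.1 x.2 - Q x.1 x.2
  set D := G s₁ a₁ - Q s₁ a₁
  have hGD : ∀ s a, G s a ≤ Q s a + D := fun s a => by linarith [hmax (s, a)]
  have hcontract : ∀ s a, G s a ≤ Q s a + γ * D := fun s a =>
    calc G s a ≤ Tstd γ R p G s a := hG s a
      _ ≤ bellmanBackup γ R p (fun s' => qmax (Q s') + D) s a :=
        bellmanBackup_mono hγ0 hp0 R (fun s' => qmax_le_qmax_add (hGD s')) s a
      _ = Q s a + γ * D := by rw [bellmanBackup_add_const hp1, ← Tstd_eq_bellmanBackup, hQ]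
  have hD : D ≤ 0 := by nlinarith [hcontract s₁ a₁]
  linarith [hGD s₀ a₀]

theorem sum_mul_le_Tstd {ι : Type*} [Fintype ι] (hγ0 : 0 ≤ γ) (hp0 : ∀ s a s', 0 ≤ p s a s')
    (c : ι → ℝ) (hc : ∀ j, 0 ≤ c j) (R : ι → S → A → S → ℝ) (W : ι → S → A → ℝ)
    (V : ι → S → ℝ) (hW : ∀ j, W j = bellmanBackup γ (R j) p (V j))
    (hV : ∀ s', ∃ a', ∀ j, V j s' ≤ W j s' a') :
    (fun s a => ∑ j, c j * W j s a) ≤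
      Tstd γ (fun s a s' => ∑ j, c j * R j s a s') p fun s a => ∑ j, c j * W j s a := by
  intro s a
  calc ∑ j, c j * W j s a
      = bellmanBackup γ (fun s a s' => ∑ j, c j * R j s a s') p
          (fun s' => ∑ j, c j * V j s') s a := by
        simp only [hW]; exact sum_mul_bellmanBackup c R V s a
    _ ≤ _ := bellmanBackup_mono hγ0 hp0 _ (fun s' => ?_) s a
  obtain ⟨a', ha'⟩ := hV s'
  exact (sum_le_sum fun j _ => mul_le_mul_of_nonneg_left (ha' j) (hc j)).trans
    (le_qmax_s18 (fun a => ∑ j, c j * W j s' a) a')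

end OptimalBellman

theorem linear_combination_lower_bound_general {S A : Type*} [Fintype S] [Fintype A]
    [Nonempty A]
    (γ : ℝ) (hγ0 : 0 ≤ γ) (hγ1 : γ < 1)
    (p : S → A → S → ℝ)
    (hp0 : ∀ s a s', 0 ≤ p s a s') (hp1 : ∀ s a, ∑ s', p s a s' = 1)
    (n : ℕ) (hn : 0 < n)
    (R : Fin n → S → A → S → ℝ) (c : Fin n → ℝ) (hc : ∀ i, 0 ≤ c i)
    (Qi : Fin n → S → A → ℝ) (hQi : ∀ i, Tstd γ (R i) p (Qi i) = Qi i)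
    (Qmu : Fin n → S → A → ℝ) (hQmu : ∀ i, Tmu γ (R i) p (Qmu i) = Qmu i)
    (Qstar : S → A → ℝ)
    (hQstar : Tstd γ (fun s a s' => ∑ i, c i * R i s a s') p Qstar = Qstar) :
    (∀ i, ∀ s a,
        c i * Qi i s a + ∑ j ∈ Finset.univ.erase i, c j * Qmu j s a ≤ Qstar s a) ∧
      ∀ s a,
        (Finset.univ.sup' (Finset.univ_nonempty_iff.mpr (Fin.pos_iff_nonempty.mp hn))
            fun i => c i * Qi i s a + ∑ j ∈ Finset.univ.erase i, c j * Qmu j s a) ≤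
          Qstar s a := by
  have key : ∀ i s a,
      c i * Qi i s a + ∑ j ∈ univ.erase i, c j * Qmu j s a ≤ Qstar s a := by
    intro i s a
    let W j := if j = i then Qi j else Qmu j
    let V j s' := if j = i then qmax (Qi j s') else qmin (Qmu j s')
    have hW : ∀ j, W j = bellmanBackup γ (R j) p (V j) := fun j => by
      by_cases hj : j = i <;> simp only [W, V, hj, if_true, if_false]
      exacts [(hQi i).symm, (hQmu j).symm]
    have hV : ∀ s', ∃ a', ∀ j, V j s' ≤ W j s' a' := fun s' => by
      obtain ⟨a', ha'⟩ := exists_qmax_eq (Qi i s')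
      refine ⟨a', fun j => ?_⟩
      by_cases hj : j = i
      · simp only [W, V, hj, if_true, ha', le_refl]
      · simp only [W, V, hj, if_false]; exact qmin_le _ a'
    have hsum : c i * Qi i s a + ∑ j ∈ univ.erase i, c j * Qmu j s a = ∑ j, c j * W j s a := by
      rw [← add_sum_erase _ _ (mem_univ i)]
      simp only [W, if_true]
      congr 1
      exact sum_congr rfl fun j hj => by simp only [if_neg (ne_of_mem_erase hj)]
    rw [hsum]
    exact le_fixedPoint_of_le_Tstd hγ0 hγ1 hp0 hp1
      (sum_mul_le_Tstd hγ0 hp0 c hc R W V hW hV) hQstar s a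
  exact ⟨key, fun s a => sup'_le _ _ fun i _ => key i s a⟩

/-- Lower bound for a nonnegative linear combination of rewards: with `Q_i*` the optimal and
`Q_i^μ` the pessimistic fixed points for reward `R_i`, and `Q*` the optimal fixed point for
`𝓡 = Σ_i c_i R_i` with `c_i ≥ 0`, for every `i`,
`c_i Q_i* + Σ_{j ≠ i} c_j Q_j^μ ≤ Q*` pointwise, and hence the maximum over `i` of the
left-hand sides is also `≤ Q*` pointwise. -/
theorem linear_combination_lower_bound {S A : Type*} [Fintype S] [Fintype A]
    [Nonempty S] [Nonempty A]
    (γ : ℝ) (hγ0 : 0 ≤ γ) (hγ1 : γ < 1)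
    (p : S → A → S → ℝ)
    (hp0 : ∀ s a s', 0 ≤ p s a s') (hp1 : ∀ s a, ∑ s', p s a s' = 1)
    (n : ℕ) (hn : 0 < n)
    (R : Fin n → S → A → S → ℝ) (c : Fin n → ℝ) (hc : ∀ i, 0 ≤ c i)
    (Qi : Fin n → S → A → ℝ) (hQi : ∀ i, Tstd γ (R i) p (Qi i) = Qi i)
    (Qmu : Fin n → S → A → ℝ) (hQmu : ∀ i, Tmu γ (R i) p (Qmu i) = Qmu i)
    (Qstar : S → A → ℝ)
    (hQstar : Tstd γ (fun s a s' => ∑ i, c i * R i s a s') p Qstar = Qstar) :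
    (∀ i, ∀ s a,
        c i * Qi i s a + ∑ j ∈ Finset.univ.erase i, c j * Qmu j s a ≤ Qstar s a) ∧
      ∀ s a,
        (Finset.univ.sup' (Finset.univ_nonempty_iff.mpr (Fin.pos_iff_nonempty.mp hn))
            fun i => c i * Qi i s a + ∑ j ∈ Finset.univ.erase i, c j * Qmu j s a) ≤
          Qstar s a :=
  linear_combination_lower_bound_general γ hγ0 hγ1 p hp0 hp1 n hn R c hc Qi hQi Qmu hQmu Qstar
    hQstar
end

section
/- The M-Q-M updates preserve validity of the bounds: suppose the transition kernel satisfies p(s'|s,a) = 0 whenever s' ∉ N(s,a), and let Q* be the fixed point of the standard Bellman operator T. If Q ≥ Q* pointwise then U Q ≥ Q* pointwise, and if Q ≤ Q* pointwise then L Q ≤ Q* pointwise; consequently, for all k ≥ 0, U^k Q ≥ Q* whenever Q ≥ Q*, and L^k Q ≤ Q* whenever Q ≤ Q*. -/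
/-- M-Q-M updates preserve validity of bounds: if the kernel is supported in the lite-model and
`Q*` is the fixed point of the standard Bellman operator, then `Q ≥ Q*` implies `U Q ≥ Q*`,
`Q ≤ Q*` implies `L Q ≤ Q*`, and consequently the same holds for all iterates `U^k`, `L^k`. -/
theorem mqm_preserves_valid_bounds {S A : Type*} [Fintype S] [Fintype A]
    [Nonempty S] [Nonempty A]
    (γ : ℝ) (hγ0 : 0 ≤ γ) (hγ1 : γ < 1)
    (R : S → A → S → ℝ) (N : S → A → Finset S) (hN : ∀ s a, (N s a).Nonempty)
    (p : S → A → S → ℝ)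
    (hp0 : ∀ s a s', 0 ≤ p s a s') (hp1 : ∀ s a, ∑ s', p s a s' = 1)
    (hsupp : ∀ s a s', s' ∉ N s a → p s a s' = 0)
    (Qstar : S → A → ℝ) (hQstar : Tstd γ R p Qstar = Qstar) :
    (∀ Q : S → A → ℝ, (∀ s a, Qstar s a ≤ Q s a) →
        ∀ s a, Qstar s a ≤ Uop γ R N hN Q s a) ∧
      (∀ Q : S → A → ℝ, (∀ s a, Q s a ≤ Qstar s a) →
        ∀ s a, Lop γ R N hN Q s a ≤ Qstar s a) ∧
      (∀ (Q : S → A → ℝ) (k : ℕ), (∀ s a, Qstar s a ≤ Q s a) →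
        ∀ s a, Qstar s a ≤ (Uop γ R N hN)^[k] Q s a) ∧
      (∀ (Q : S → A → ℝ) (k : ℕ), (∀ s a, Q s a ≤ Qstar s a) →
        ∀ s a, (Lop γ R N hN)^[k] Q s a ≤ Qstar s a) := by
  have hqmax : ∀ (f g : A → ℝ), (∀ a, f a ≤ g a) → qmax f ≤ qmax g := by
    intro f g h
    apply Finset.sup'_le
    intro a _
    exact le_trans (h a) (Finset.le_sup' g (Finset.mem_univ a))
  have hU : ∀ Q : S → A → ℝ, (∀ s a, Qstar s a ≤ Q s a) →
      ∀ s a, Qstar s a ≤ Uop γ R N hN Q s a := by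
    intro Q hQ s a
    have hT : Qstar s a ≤ Tmax γ R N hN Q s a := by
      have h1 : Qstar s a = ∑ s', p s a s' * (R s a s' + γ * qmax (Qstar s')) := by
        conv_lhs => rw [← hQstar]
        rfl
      rw [h1]
      have hM : ∀ s' ∈ N s a, R s a s' + γ * qmax (Qstar s') ≤ Tmax γ R N hN Q s a := by
        intro s' hs'
        have h2 : R s a s' + γ * qmax (Q s') ≤ Tmax γ R N hN Q s a :=
          by unfold Tmax; exact Finset.le_sup' (fun s'' => R s a s'' + γ * qmax (Q s'')) hs'
        refine le_trans ?_ h2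
        have := hqmax (Qstar s') (Q s') (fun a' => hQ s' a')
        nlinarith
      calc ∑ s', p s a s' * (R s a s' + γ * qmax (Qstar s'))
          ≤ ∑ s', p s a s' * Tmax γ R N hN Q s a := by
            apply Finset.sum_le_sum
            intro s' _
            by_cases h : s' ∈ N s a
            · exact mul_le_mul_of_nonneg_left (hM s' h) (hp0 s a s')
            · simp [hsupp s a s' h]
        _ = Tmax γ R N hN Q s a := by rw [← Finset.sum_mul, hp1]; ring
    exact le_min (hQ s a) hT
  have hL : ∀ Q : S → A → ℝ, (∀ s a, Q s a ≤ Qstar s a) →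
      ∀ s a, Lop γ R N hN Q s a ≤ Qstar s a := by
    intro Q hQ s a
    have hT : Tmin γ R N hN Q s a ≤ Qstar s a := by
      have h1 : Qstar s a = ∑ s', p s a s' * (R s a s' + γ * qmax (Qstar s')) := by
        conv_lhs => rw [← hQstar]
        rfl
      rw [h1]
      have hM : ∀ s' ∈ N s a, Tmin γ R N hN Q s a ≤ R s a s' + γ * qmax (Qstar s') := by
        intro s' hs'
        have h2 : Tmin γ R N hN Q s a ≤ R s a s' + γ * qmax (Q s') :=
          by unfold Tmin; exact Finset.inf'_le (fun s'' => R s a s'' + γ * qmax (Q s'')) hs'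
        refine le_trans h2 ?_
        have := hqmax (Q s') (Qstar s') (fun a' => hQ s' a')
        nlinarith
      calc Tmin γ R N hN Q s a
          = ∑ s', p s a s' * Tmin γ R N hN Q s a := by
            rw [← Finset.sum_mul, hp1]; ring
        _ ≤ ∑ s', p s a s' * (R s a s' + γ * qmax (Qstar s')) := by
            apply Finset.sum_le_sum
            intro s' _
            by_cases h : s' ∈ N s a
            · exact mul_le_mul_of_nonneg_left (hM s' h) (hp0 s a s')
            · simp [hsupp s a s' h]
    exact max_le (hQ s a) hT
  refine ⟨hU, hL, ?_, ?_⟩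
  · intro Q k
    induction k generalizing Q with
    | zero => intro h; simpa using h
    | succ k ih =>
      intro h s a
      rw [Function.iterate_succ_apply]
      exact ih _ (hU Q h) s a
  · intro Q k
    induction k generalizing Q with
    | zero => intro h; simpa using h
    | succ k ih =>
      intro h s a
      rw [Function.iterate_succ_apply]
      exact ih _ (hL Q h) s a
end
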